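/- arXiv:1901.03196 — 4 statements merged into one kernel-verified Lean document; each statement's English description precedes it below -/
import Mathlib

section
/- Let (a_n) be a sequence of positive real numbers such that the series ∑ a_n diverges. Then for any natural number m, the series ∑ a_n^(1 + m/n) also diverges. -/
theorem stmt_0 (a : ℕ → ℝ) (hpos : ∀ n, 0 < a n) (hdiv : ¬ Summable a) (m : ℕ) :
    ¬ Summable (fun n : ℕ => a n ^ (1 + (m : ℝ) / (n : ℝ))) := by
  intro hb
  rcases Nat.eq_zero_or_pos m with hm | hm
  · subst hm
    apply hdiv
    refine hb.congr (fun n => ?_)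
    simp [Real.rpow_one]
  · set r : ℝ := (2 : ℝ) ^ (-(1 : ℝ) / m) with hr
    have hr0 : 0 < r := Real.rpow_pos_of_pos (by norm_num) _
    have hr1 : r < 1 := by
      apply Real.rpow_lt_one_of_one_lt_of_neg (by norm_num)
      apply div_neg_of_neg_of_pos (by norm_num)
      exact_mod_cast hm
    apply hdiv
    have hsum : Summable (fun n : ℕ =>
        2 * a n ^ (1 + (m : ℝ) / (n : ℝ)) + r ^ n) :=
      (hb.mul_left 2).add (summable_geometric_of_lt_one hr0.le hr1)
    refine Summable.of_nonneg_of_le (fun n => (hpos n).le) (fun n => ?_) hsum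
    rcases le_or_gt (a n) (r ^ n) with h | h
    · have hb0 : 0 ≤ 2 * a n ^ (1 + (m : ℝ) / (n : ℝ)) := by
        have := Real.rpow_nonneg (hpos n).le (1 + (m : ℝ) / (n : ℝ))
        linarith
      linarith
    · -- a n > r^n, show a n ≤ 2 * a n ^ (1 + m/n)
      have hrn : 0 ≤ r ^ n := (pow_pos hr0 n).le
      rcases Nat.eq_zero_or_pos n with hn | hn
      · subst hn
        simp only [Nat.cast_zero, div_zero, add_zero, Real.rpow_one]
        have : 0 ≤ r ^ 0 := hrn
        linarith [(pow_pos hr0 0)]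
      · have hexp : 0 ≤ (m : ℝ) / (n : ℝ) := by positivity
        have key : (r ^ n) ^ ((m : ℝ) / (n : ℝ)) = 1 / 2 := by
          rw [← Real.rpow_natCast r n, ← Real.rpow_mul (by norm_num : (0:ℝ) ≤ 2)]
          rw [← Real.rpow_mul (by norm_num : (0:ℝ) ≤ 2)]
          have hn0 : (n : ℝ) ≠ 0 := by exact_mod_cast hn.ne'
          have hm0 : (m : ℝ) ≠ 0 := by exact_mod_cast hm.ne'
          have : -(1:ℝ) / m * n * (m / n) = -1 := by field_simp
          rw [this, Real.rpow_neg_one]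
          norm_num
        have hmono : (r ^ n) ^ ((m : ℝ) / (n : ℝ)) ≤ a n ^ ((m : ℝ) / (n : ℝ)) :=
          Real.rpow_le_rpow hrn h.le hexp
        rw [key] at hmono
        have hsplit : a n ^ (1 + (m : ℝ) / (n : ℝ)) = a n * a n ^ ((m : ℝ) / (n : ℝ)) := by
          rw [Real.rpow_add (hpos n), Real.rpow_one]
        have : a n * (1 / 2) ≤ a n ^ (1 + (m : ℝ) / (n : ℝ)) := by
          rw [hsplit]
          exact mul_le_mul_of_nonneg_left hmono (hpos n).le
        nlinarith [(pow_pos hr0 n)]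
end

section
/- Let (a_n) be a sequence of real numbers with 0 < a_n < 1 for all n, and suppose a_n → 0 and ∑ a_n = ∞. Then the set B = {n : a_n > 1/n²} is infinite, and along B one has a_n^(m/n) → 1 for every fixed natural number m. -/
open Filter Real

theorem stmt_1 (a : ℕ → ℝ) (hpos : ∀ n, 0 < a n) (hlt : ∀ n, a n < 1)
    (hlim : Tendsto a atTop (nhds 0)) (hdiv : ¬ Summable a) :
    Set.Infinite {n : ℕ | 1 / (n : ℝ) ^ 2 < a n} ∧
    ∀ m : ℕ, Tendsto (fun n : ℕ => a n ^ ((m : ℝ) / (n : ℝ)))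
      (atTop ⊓ Filter.principal {n : ℕ | 1 / (n : ℝ) ^ 2 < a n}) (nhds 1) := by
  constructor
  · intro hfin
    apply hdiv
    obtain ⟨N, hN⟩ := hfin.bddAbove
    rw [← summable_nat_add_iff (N + 1)]
    have hsum : Summable (fun n : ℕ => 1 / ((n : ℝ) + (N + 1)) ^ 2) := by
      have := (summable_nat_add_iff (f := fun n : ℕ => 1 / (n : ℝ) ^ 2) (N + 1)).mpr
        (summable_one_div_nat_pow.mpr one_lt_two)
      refine this.congr fun n => ?_
      push_cast
      ring_nf
    refine hsum.of_nonneg_of_le (fun n => (hpos _).le) fun n => ?_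
    have hnotB : n + (N + 1) ∉ {n : ℕ | 1 / (n : ℝ) ^ 2 < a n} := fun h => by
      have := hN h; omega
    have : ¬ (1 / ((n + (N + 1) : ℕ) : ℝ) ^ 2 < a (n + (N + 1))) := hnotB
    replace this := not_lt.mp this
    calc a (n + (N + 1)) ≤ 1 / ((n + (N + 1) : ℕ) : ℝ) ^ 2 := this
      _ = 1 / ((n : ℝ) + (N + 1)) ^ 2 := by push_cast; ring_nf
  · intro m
    set B := {n : ℕ | 1 / (n : ℝ) ^ 2 < a n}
    set l := atTop ⊓ Filter.principal B with hl
    have hB : ∀ᶠ n in l, n ∈ B := eventually_inf_principal.2 (Eventually.of_forall fun n h => h)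
    have hge1 : ∀ᶠ n in l, 1 ≤ n := (eventually_ge_atTop 1).filter_mono inf_le_left
    have key : Tendsto (fun n : ℕ => (m : ℝ) / n * Real.log (a n)) l (nhds 0) := by
      have hlow : Tendsto (fun n : ℕ => -(2 * m) * (Real.log n / n)) l (nhds 0) := by
        have h0 : Tendsto (fun x : ℝ => Real.log x / x) atTop (nhds 0) := by
          have := (isLittleO_log_rpow_atTop one_pos).tendsto_div_nhds_zero
          simpa using this
        have := (h0.comp tendsto_natCast_atTop_atTop).const_mul (-(2 * (m:ℝ)))
        simpa using this.mono_left inf_le_left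
      refine tendsto_of_tendsto_of_tendsto_of_le_of_le' hlow tendsto_const_nhds ?_ ?_
      · filter_upwards [hB, hge1] with n hn h1
        have hn1 : (1:ℝ) ≤ (n:ℝ) := by exact_mod_cast h1
        have hnpos : (0:ℝ) < n := lt_of_lt_of_le zero_lt_one hn1
        have hlog : -(2 * Real.log n) ≤ Real.log (a n) := by
          have : Real.log (1 / (n:ℝ)^2) ≤ Real.log (a n) :=
            Real.log_le_log (by positivity) hn.le
          rwa [Real.log_div one_ne_zero (by positivity), Real.log_one,
            Real.log_pow, zero_sub] at this
        have hmn : (0:ℝ) ≤ (m:ℝ) / n := by positivity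
        calc -(2 * (m:ℝ)) * (Real.log n / n) = (m:ℝ)/n * (-(2 * Real.log n)) := by ring
          _ ≤ (m:ℝ)/n * Real.log (a n) := by
              exact mul_le_mul_of_nonneg_left hlog hmn
      · filter_upwards [hge1] with n h1
        have hmn : (0:ℝ) ≤ (m:ℝ) / n := by positivity
        exact mul_nonpos_of_nonneg_of_nonpos hmn (Real.log_nonpos (hpos n).le (hlt n).le)
    have := (Real.continuous_exp.tendsto 0).comp key
    rw [Real.exp_zero] at this
    refine this.congr' ?_
    filter_upwards with n
    rw [Function.comp_apply, Real.rpow_def_of_pos (hpos n), mul_comm]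
end

section
/- Suppose θ : [0,∞) → [0,∞) is decreasing with θ(r) ≥ 4/√r for r ≥ 1, and suppose ∑_{m=1}^∞ θ(m⁴)/m = ∞. Let ρ ≥ 0 and define b_m = sup_{r≥0} (ρ² + r²)^m e^{−rθ(r)/2} for m ≥ max{2, ρ}. Then ∑_m b_m^{−1/(2m)} = ∞. -/
/-!
Write `c = θ(m⁴)`. Since `ρ² + r² ≤ (1 + ρ²)(1 + r)²`, the supremum `b_m` is at most
`(1 + ρ²)^m` times the `2m`-th power of `sup_r (1 + r) e^{-rθ(r)/(4m)}`, and this is `O(m / c)`: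
for `r ≤ m⁴` monotonicity gives `θ(r) ≥ c` and `x e^{-tx} ≤ 1/t` gives `O(m/c)`; for `r ≥ m⁴`
the bound `rθ(r) ≥ 4√r` gives `O(m)`, which is `O(m/c)` because `c ≤ θ(1)`.
Hence `b_m^{-1/(2m)} ≥ c/(Km)` for a constant `K`, and the series diverges by comparison with
`∑ θ(m⁴)/m`.
-/

open Real Set Filter
open scoped Nat

lemma pow_mul_exp_neg_mul_le (n : ℕ) {t x : ℝ} (ht : 0 < t) (hx : 0 ≤ x) :
    x ^ n * exp (-(t * x)) ≤ (n / t) ^ n := by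
  have hfact : (t * x) ^ n ≤ n ^ n * exp (t * x) := by
    have h := pow_div_factorial_le_exp (t * x) (mul_nonneg ht.le hx) n
    rw [div_le_iff₀ (by positivity)] at h
    calc (t * x) ^ n ≤ exp (t * x) * n ! := h
      _ ≤ n ^ n * exp (t * x) := by
        rw [mul_comm]; gcongr; exact_mod_cast Nat.factorial_le_pow n
  rw [div_pow, exp_neg, ← div_eq_mul_inv, div_le_div_iff₀ (exp_pos _) (by positivity)]
  linarith [mul_pow t x n, mul_comm (x ^ n) (t ^ n)]

lemma mul_exp_neg_mul_le {t x : ℝ} (ht : 0 < t) (hx : 0 ≤ x) : x * exp (-(t * x)) ≤ t⁻¹ := by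
  simpa [one_div] using pow_mul_exp_neg_mul_le 1 ht hx

section
variable {θ : ℝ → ℝ} {m : ℕ} {r : ℝ}

lemma pos_of_four_div_sqrt_le (hθ : ∀ r ≥ (1:ℝ), 4 / √r ≤ θ r) (hr : 1 ≤ r) : 0 < θ r :=
  (div_pos four_pos (sqrt_pos.2 (by linarith))).trans_le (hθ r hr)

lemma one_add_mul_exp_le_of_le_pow_four (hmono : AntitoneOn θ (Ici 0)) (hpos : 0 < θ (m ^ 4))
    (hm : 1 ≤ m) (hr₀ : 0 ≤ r) (hr : r ≤ m ^ 4) :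
    (1 + r) * exp (-(r * θ r) / (4 * m)) ≤ exp (θ 1 / 4) * (4 * m / θ (m ^ 4)) := by
  set c := θ (m ^ 4)
  have hm' : (1 : ℝ) ≤ m := by exact_mod_cast hm
  have hm4 : (1 : ℝ) ≤ m ^ 4 := one_le_pow₀ hm'
  have hcr : c ≤ θ r := hmono hr₀ (mem_Ici.2 (by positivity)) hr
  have hc1 : c ≤ θ 1 := hmono (mem_Ici.2 zero_le_one) (mem_Ici.2 (by positivity)) hm4
  have ht : 0 < c / (4 * m) := by positivity
  calc (1 + r) * exp (-(r * θ r) / (4 * m))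
      ≤ (1 + r) * exp (-(c / (4 * m) * (1 + r)) + c / (4 * m)) := by
        gcongr
        have : r * c ≤ r * θ r := by gcongr
        rw [← sub_nonneg]
        field_simp
        linarith
    _ = (1 + r) * exp (-(c / (4 * m) * (1 + r))) * exp (c / (4 * m)) := by
        rw [exp_add, mul_assoc]
    _ ≤ (c / (4 * m))⁻¹ * exp (θ 1 / 4) := by
        gcongr
        · exact mul_exp_neg_mul_le ht (by positivity)
        · linarith
        · linarith
    _ = exp (θ 1 / 4) * (4 * m / c) := by rw [inv_div, mul_comm]

lemma one_add_mul_exp_le_of_pow_four_le (hθ : ∀ r ≥ (1:ℝ), 4 / √r ≤ θ r) (hm : 1 ≤ m)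
    (hr : (m : ℝ) ^ 4 ≤ r) :
    (1 + r) * exp (-(r * θ r) / (4 * m)) ≤ 64 * m := by
  have hm' : (1 : ℝ) ≤ m := by exact_mod_cast hm
  have hr₁ : 1 ≤ r := (one_le_pow₀ hm').trans hr
  set s := √r
  have hs : 0 < s := sqrt_pos.2 (by linarith)
  have hrs : r = s ^ 2 := (sq_sqrt (by linarith)).symm
  have hms : (m : ℝ) ^ 2 ≤ s := by
    rw [← sqrt_sq (by positivity : (0 : ℝ) ≤ m ^ 2)]
    exact sqrt_le_sqrt (by linarith)
  have hθr : 4 * s ≤ r * θ r := by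
    have := mul_le_mul_of_nonneg_left (hθ r hr₁) (by linarith : 0 ≤ r)
    rwa [mul_div_assoc', mul_comm r 4, mul_div_assoc, div_sqrt] at this
  -- Half of the decay `e^{-s/m}` absorbs `s²`; the other half is at most `e^{-m/2}` as `s ≥ m²`.
  calc (1 + r) * exp (-(r * θ r) / (4 * m))
      ≤ 2 * s ^ 2 * exp (-(1 / (2 * m) * s) + -(s / (2 * m))) := by
        gcongr
        · linarith
        · field_simp
          linarith
    _ = 2 * (s ^ 2 * exp (-(1 / (2 * m) * s))) * exp (-(s / (2 * m))) := by
        rw [exp_add]; ring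
    _ ≤ 2 * ((2 : ℕ) / (1 / (2 * m))) ^ 2 * exp (-(1 / 2 * m)) := by
        gcongr
        · exact pow_mul_exp_neg_mul_le 2 (by positivity) hs.le
        · rw [le_div_iff₀ (by positivity)]
          nlinarith
    _ = 32 * m * (m * exp (-(1 / 2 * m))) := by push_cast; field_simp; ring
    _ ≤ 32 * m * (1 / 2)⁻¹ := by gcongr; exact mul_exp_neg_mul_le (by norm_num) (by positivity)
    _ = 64 * m := by norm_num; ring

lemma one_add_mul_exp_le (hmono : AntitoneOn θ (Ici 0)) (hθ : ∀ r ≥ (1:ℝ), 4 / √r ≤ θ r)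
    (hm : 1 ≤ m) (hr : 0 ≤ r) :
    (1 + r) * exp (-(r * θ r) / (4 * m)) ≤ (4 * exp (θ 1 / 4) + 64 * θ 1) * m / θ (m ^ 4) := by
  have hm4 : (1 : ℝ) ≤ m ^ 4 := one_le_pow₀ (by exact_mod_cast hm)
  have hpos : 0 < θ (m ^ 4) := pos_of_four_div_sqrt_le hθ hm4
  have hc1 : θ (m ^ 4) ≤ θ 1 := hmono (mem_Ici.2 zero_le_one) (mem_Ici.2 (by positivity)) hm4
  rcases le_total r (m ^ 4) with hrm | hrm
  · calc (1 + r) * exp (-(r * θ r) / (4 * m))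
        ≤ exp (θ 1 / 4) * (4 * m / θ (m ^ 4)) :=
          one_add_mul_exp_le_of_le_pow_four hmono hpos hm hr hrm
      _ = 4 * exp (θ 1 / 4) * m / θ (m ^ 4) := by ring
      _ ≤ _ := by
          rw [add_mul, add_div]
          exact le_add_of_nonneg_right (by have := hpos.trans_le hc1; positivity)
  · calc (1 + r) * exp (-(r * θ r) / (4 * m)) ≤ 64 * m :=
          one_add_mul_exp_le_of_pow_four_le hθ hm hrm
      _ ≤ 64 * θ 1 * m / θ (m ^ 4) := by
          rw [le_div_iff₀ hpos]
          have : 0 ≤ (m : ℝ) := m.cast_nonneg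
          nlinarith
      _ ≤ _ := by
          rw [add_mul, add_div]
          exact le_add_of_nonneg_left (by positivity)

lemma sq_add_sq_pow_mul_exp_le (hmono : AntitoneOn θ (Ici 0))
    (hθ : ∀ r ≥ (1:ℝ), 4 / √r ≤ θ r) (ρ : ℝ) (hm : 1 ≤ m) (hr : 0 ≤ r) :
    (ρ ^ 2 + r ^ 2) ^ m * exp (-(r * θ r) / 2) ≤
      (√(1 + ρ ^ 2) * ((4 * exp (θ 1 / 4) + 64 * θ 1) * m / θ (m ^ 4))) ^ (2 * m) := by
  have hm' : (0 : ℝ) < m := by exact_mod_cast hm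
  have hexp : exp (-(r * θ r) / 2) = (exp (-(r * θ r) / (4 * m)) ^ 2) ^ m := by
    rw [← pow_mul, ← exp_nat_mul]; congr 1; push_cast; field_simp; ring
  calc (ρ ^ 2 + r ^ 2) ^ m * exp (-(r * θ r) / 2)
      ≤ ((1 + ρ ^ 2) * (1 + r) ^ 2) ^ m * exp (-(r * θ r) / 2) := by
        gcongr; nlinarith [sq_nonneg ρ, sq_nonneg (ρ * r)]
    _ = (√(1 + ρ ^ 2) * ((1 + r) * exp (-(r * θ r) / (4 * m)))) ^ (2 * m) := by
        rw [hexp, pow_mul, ← mul_pow]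
        congr 1
        rw [mul_pow, mul_pow, sq_sqrt (by positivity)]
        ring
    _ ≤ _ := by gcongr; exact one_add_mul_exp_le hmono hθ hm hr
end

lemma inv_le_sSup_image_rpow {f : ℝ → ℝ} {s : Set ℝ} {B : ℝ} {n : ℕ} (hn : n ≠ 0) (hB : 0 < B)
    (hpos : ∃ x ∈ s, 0 < f x) (hf : ∀ x ∈ s, f x ≤ B ^ n) :
    B⁻¹ ≤ sSup (f '' s) ^ (-(1 : ℝ) / n) := by
  obtain ⟨x, hxs, hfx⟩ := hpos
  have hbdd : BddAbove (f '' s) := ⟨B ^ n, forall_mem_image.2 hf⟩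
  have hsup_pos : 0 < sSup (f '' s) := hfx.trans_le (le_csSup hbdd (mem_image_of_mem f hxs))
  have hsup_le : sSup (f '' s) ≤ B ^ n :=
    csSup_le (image_nonempty.2 ⟨x, hxs⟩) (forall_mem_image.2 hf)
  calc B⁻¹ = (B ^ n) ^ (-(1 : ℝ) / n) := by
        rw [← rpow_natCast, ← rpow_mul hB.le, mul_div_cancel₀ _ (by exact_mod_cast hn),
          rpow_neg_one]
    _ ≤ sSup (f '' s) ^ (-(1 : ℝ) / n) :=
        rpow_le_rpow_of_nonpos hsup_pos hsup_le
          (div_nonpos_of_nonpos_of_nonneg (by norm_num) n.cast_nonneg)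

lemma exists_div_le_sSup_rpow {θ : ℝ → ℝ} (hmono : AntitoneOn θ (Ici 0))
    (hθ : ∀ r ≥ (1:ℝ), 4 / √r ≤ θ r) (ρ : ℝ) :
    ∃ K > 0, ∀ m : ℕ, 1 ≤ m → θ (m ^ 4) / (K * m) ≤
      sSup ((fun r => (ρ ^ 2 + r ^ 2) ^ m * exp (-(r * θ r) / 2)) '' Ici 0) ^
        (-(1 : ℝ) / (2 * m)) := by
  have hθ₁ : 0 < θ 1 := pos_of_four_div_sqrt_le hθ le_rfl
  refine ⟨√(1 + ρ ^ 2) * (4 * exp (θ 1 / 4) + 64 * θ 1), by positivity, fun m hm => ?_⟩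
  have hpos : 0 < θ (m ^ 4) := pos_of_four_div_sqrt_le hθ (one_le_pow₀ (by exact_mod_cast hm))
  have hb := inv_le_sSup_image_rpow (f := fun r => (ρ ^ 2 + r ^ 2) ^ m * exp (-(r * θ r) / 2))
    (s := Ici 0) (n := 2 * m) (by omega) (by positivity) ⟨1, by simp, by positivity⟩
    (fun r hr => sq_add_sq_pow_mul_exp_le hmono hθ ρ hm hr)
  push_cast at hb
  convert hb using 1
  field_simp

theorem stmt_12_general (θ : ℝ → ℝ) (hmono : AntitoneOn θ (Set.Ici 0))
    (hθ : ∀ r ≥ (1:ℝ), 4 / Real.sqrt r ≤ θ r)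
    (hdiv : ¬ Summable (fun m : ℕ => θ ((m : ℝ) ^ 4) / (m : ℝ)))
    (ρ : ℝ) :
    ¬ Summable (fun m : ℕ =>
      (sSup ((fun r : ℝ => (ρ ^ 2 + r ^ 2) ^ m * Real.exp (-(r * θ r) / 2)) ''
          Set.Ici 0)) ^ (-(1 : ℝ) / (2 * m))) := by
  intro hsum
  obtain ⟨K, hK, hb⟩ := exists_div_le_sSup_rpow hmono hθ ρ
  refine hdiv (.of_norm_bounded_eventually_nat (hsum.mul_left K) ?_)
  filter_upwards [eventually_ge_atTop 1] with m hm
  have hm' : (1 : ℝ) ≤ m := by exact_mod_cast hm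
  have hpos : 0 < θ (m ^ 4) := pos_of_four_div_sqrt_le hθ (one_le_pow₀ hm')
  rw [norm_of_nonneg (by positivity)]
  calc θ (m ^ 4) / m = K * (θ (m ^ 4) / (K * m)) := by field_simp
    _ ≤ _ := by gcongr; exact hb m hm

theorem stmt_12 (θ : ℝ → ℝ) (hmono : AntitoneOn θ (Set.Ici 0))
    (hnn : ∀ r ≥ (0:ℝ), 0 ≤ θ r) (hθ : ∀ r ≥ (1:ℝ), 4 / Real.sqrt r ≤ θ r)
    (hdiv : ¬ Summable (fun m : ℕ => θ ((m : ℝ) ^ 4) / (m : ℝ)))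
    (ρ : ℝ) (hρ : 0 ≤ ρ) :
    ¬ Summable (fun m : ℕ =>
      (sSup ((fun r : ℝ => (ρ ^ 2 + r ^ 2) ^ m * Real.exp (-(r * θ r) / 2)) ''
          Set.Ici 0)) ^ (-(1 : ℝ) / (2 * m))) :=
  stmt_12_general θ hmono hθ hdiv ρ
end

section
/- Suppose (A_r)^{−1/(2m)} → 1 as m → ∞ for each fixed positive constant A_r, and suppose (c_m) is a sequence of positive reals with ∑ c_m^{−1/(2m)} = ∞. If d_m ≤ A_r · c_{m+r} for all m (with r a fixed natural number and A_r a fixed positive constant), then ∑ d_m^{−1/(2m)} = ∞. -/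
open Real Filter Topology

/-!
Put `a n = c n ^ (-1/(2n))`. For `m ≥ 1` the hypothesis gives
`c (m+r) ^ (-1/(2m)) ≤ A ^ (1/(2m)) * d m ^ (-1/(2m)) ≤ 2 * d m ^ (-1/(2m))` eventually, and the left
side equals `a (m+r) ^ (1 + r/m)`. So it suffices that raising the terms of a divergent series of
nonnegative reals to the powers `1 + r/n` keeps it divergent. This holds because
`a ≤ 2^r * a^(1 + r/n) + 2^(-n)`: either `a ≤ 2^(-n)`, or `a^(r/n) ≥ (2^(-n))^(r/n) = 2^(-r)`.
-/

lemma le_two_rpow_mul_rpow_one_add_div_add {a r x : ℝ} (ha : 0 ≤ a) (hr : 0 ≤ r) (hx : 0 < x) :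
    a ≤ 2 ^ r * a ^ (1 + r / x) + 2 ^ (-x) := by
  rcases le_or_gt a (2 ^ (-x)) with hsmall | hlarge
  · have : 0 ≤ 2 ^ r * a ^ (1 + r / x) := by positivity
    linarith
  · have ha₀ : 0 < a := (rpow_pos_of_pos two_pos _).trans hlarge
    have hpow : (2 : ℝ) ^ (-r) ≤ a ^ (r / x) :=
      calc (2 : ℝ) ^ (-r) = (2 ^ (-x)) ^ (r / x) := by
            rw [← rpow_mul zero_le_two]; congr 1; field_simp
        _ ≤ a ^ (r / x) := by gcongr
    calc a = 2 ^ r * (2 ^ (-r) * a) := by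
          rw [← mul_assoc, ← rpow_add two_pos, add_neg_cancel, rpow_zero, one_mul]
      _ ≤ 2 ^ r * a ^ (1 + r / x) := by
          rw [rpow_add ha₀, rpow_one, mul_comm a]
          gcongr
      _ ≤ _ := le_add_of_nonneg_right (by positivity)

theorem not_summable_rpow_one_add_div {a : ℕ → ℝ} (ha : ∀ n, 0 ≤ a n) (h : ¬Summable a)
    {r : ℝ} (hr : 0 ≤ r) : ¬Summable fun n : ℕ => a n ^ (1 + r / n) := by
  intro hpow
  have hgeom : Summable fun n : ℕ => (2 : ℝ) ^ (-(n : ℝ)) := by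
    simpa [rpow_neg, rpow_natCast, inv_pow] using summable_geometric_two
  refine h (.of_norm_bounded_eventually_nat ((hpow.mul_left (2 ^ r)).add hgeom) ?_)
  filter_upwards [eventually_gt_atTop 0] with n hn
  rw [norm_of_nonneg (ha n)]
  exact le_two_rpow_mul_rpow_one_add_div_add (ha n) hr (by exact_mod_cast hn)

lemma tendsto_rpow_one_div_two_mul_natCast {A : ℝ} (hA : A ≠ 0) :
    Tendsto (fun m : ℕ => A ^ (1 / (2 * m : ℝ))) atTop (𝓝 1) := by
  have h : Tendsto (fun m : ℕ => 1 / (2 * m : ℝ)) atTop (𝓝 0) :=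
    tendsto_const_nhds.div_atTop (tendsto_natCast_atTop_atTop.const_mul_atTop two_pos)
  simpa [Function.comp_def] using (continuousAt_const_rpow (b := 0) hA).tendsto.comp h

lemma rpow_neg_le_rpow_mul_rpow_neg {A c d e : ℝ} (hA : 0 < A) (hc : 0 < c) (hd : 0 < d)
    (he : 0 ≤ e) (h : d ≤ A * c) : c ^ (-e) ≤ A ^ e * d ^ (-e) := by
  have : (A * c) ^ (-e) ≤ d ^ (-e) := rpow_le_rpow_of_nonpos hd h (neg_nonpos.2 he)
  calc c ^ (-e) = A ^ e * (A * c) ^ (-e) := by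
        rw [mul_rpow hA.le hc.le, ← mul_assoc, ← rpow_add hA, add_neg_cancel, rpow_zero, one_mul]
    _ ≤ A ^ e * d ^ (-e) := by gcongr

lemma rpow_neg_one_div_two_mul_eq {c : ℝ} (hc : 0 < c) {m : ℕ} (hm : m ≠ 0) (r : ℕ) :
    c ^ (-(1 : ℝ) / (2 * m)) = (c ^ (-(1 : ℝ) / (2 * (m + r : ℕ)))) ^ (1 + r / m : ℝ) := by
  rw [← rpow_mul hc.le]
  congr 1
  push_cast
  field_simp

theorem stmt_18 (c d : ℕ → ℝ) (hc : ∀ m, 0 < c m) (hd : ∀ m, 0 < d m)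
    (r : ℕ) (A : ℝ) (hA : 0 < A)
    (hcdiv : ¬ Summable (fun m : ℕ => c m ^ (-(1 : ℝ) / (2 * m))))
    (hdc : ∀ m : ℕ, d m ≤ A * c (m + r)) :
    ¬ Summable (fun m : ℕ => d m ^ (-(1 : ℝ) / (2 * m))) := by
  intro hsum
  have hshift : ¬Summable fun n : ℕ => c (n + r) ^ (-(1 : ℝ) / (2 * (n + r : ℕ))) :=
    fun h => hcdiv ((summable_nat_add_iff r).1 h)
  refine not_summable_rpow_one_add_div (fun n => (rpow_pos_of_pos (hc _) _).le) hshift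
    r.cast_nonneg (.of_norm_bounded_eventually_nat (hsum.mul_left 2) ?_)
  filter_upwards [eventually_gt_atTop 0,
    (tendsto_rpow_one_div_two_mul_natCast hA.ne').eventually (gt_mem_nhds one_lt_two)]
    with m hm hAm
  rw [norm_of_nonneg (rpow_pos_of_pos (rpow_pos_of_pos (hc _) _) _).le,
    ← rpow_neg_one_div_two_mul_eq (hc _) hm.ne' r, neg_div]
  calc c (m + r) ^ (-(1 / (2 * m : ℝ)))
      ≤ A ^ (1 / (2 * m : ℝ)) * d m ^ (-(1 / (2 * m : ℝ))) :=
        rpow_neg_le_rpow_mul_rpow_neg hA (hc _) (hd m) (by positivity) (hdc m)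
    _ ≤ 2 * d m ^ (-(1 / (2 * m : ℝ))) :=
        mul_le_mul_of_nonneg_right hAm.le (rpow_pos_of_pos (hd m) _).le
end
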